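/- arXiv:1712.07513 — 4 statements merged into one kernel-verified Lean document; each statement's English description precedes it below -/
import Mathlib

section
/- Let g₀ be a continuous and strictly increasing function with domain [c,d] (c<d) and range [a,b] (a<b) such that [a,b]∩[c,d] contains a non-empty open interval, and g₀(t)=t for some t∈[a,b]∩[c,d]. If there exist an interval [α,β]⊆[a,b]∩[c,d] and a pair of continuous, strictly increasing surjections g₁:[a,b]→[α,β] and g₂:[c,d]→[α,β] such that for all t∈[a,b]∩[c,d] one has (a) g₀(t)=g₁⁻¹(g₂(t)) and (b) (g₁(t)+g₂(t))/2 = t, then this pair (g₁,g₂) is unique: any other pair of continuous strictly increasing surjections onto some interval contained in [a,b]∩[c,d] satisfying (a) and (b) coincides with (g₁,g₂) on [a,b]∩[c,d]. -/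
/-!
Put `D = G₁ - g₁`. By (a), `g₁ ∘ g₀ = g₂` and `G₁ ∘ g₀ = G₂`, and by (b), `g₂ = 2 id - g₁`
and `G₂ = 2 id - G₁`; hence `D ∘ g₀ = -D` on `[a,b] ∩ [c,d]`. Let `t₀` be the fixed point of
`g₀`. On the interval between `t₀` and a point `t`, either `g₀` or its inverse is a monotone
self-map, so the orbit of `t` under it is monotone and converges. Along this orbit `D` alternates
in sign, so by continuity its limit value vanishes; as `|D|` is constant along the orbit,
`D t = 0`.
-/

open Set Filter Topology Function

theorem eq_zero_of_tendsto_of_succ_eq_neg {v : ℕ → ℝ} {L : ℝ} (hv : Tendsto v atTop (𝓝 L))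
    (hneg : ∀ n, v (n + 1) = -v n) : v 0 = 0 := by
  have hL : -L = L := by
    refine tendsto_nhds_unique ?_ ((tendsto_add_atTop_iff_nat 1).2 hv)
    simpa only [hneg] using hv.neg
  have habs : ∀ n, |v n| = |v 0| := fun n => by
    induction n with
    | zero => rfl
    | succ n ih => rw [hneg, abs_neg, ih]
  have hvL : |v 0| = |L| :=
    tendsto_nhds_unique tendsto_const_nhds (by simpa only [habs] using hv.abs)
  rw [← abs_eq_zero, hvL, abs_eq_zero]
  linarith

theorem exists_tendsto_iterate_of_mapsTo_Icc {f : ℝ → ℝ} {p q x : ℝ}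
    (hmaps : MapsTo f (Icc p q) (Icc p q)) (hmono : MonotoneOn f (Icc p q)) (hx : x ∈ Icc p q) :
    ∃ L ∈ Icc p q, Tendsto (fun n => f^[n] x) atTop (𝓝 L) := by
  have horbit : Monotone (fun n => f^[n] x) ∨ Antitone (fun n => f^[n] x) := by
    have hres : Monotone (hmaps.restrict f _ _) := fun y z hyz => hmono y.2 z.2 hyz
    have hcoe : (fun n => f^[n] x) = fun n => ((hmaps.restrict f _ _)^[n] ⟨x, hx⟩ : ℝ) := by
      ext n; rw [hmaps.iterate_restrict]; rfl
    rw [hcoe]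
    rcases le_total x (f x) with h | h
    · exact .inl (Subtype.mono_coe _ |>.comp (hres.monotone_iterate_of_le_map h))
    · exact .inr (Subtype.mono_coe _ |>.comp_antitone (hres.antitone_iterate_of_map_le h))
  have hmem : ∀ n, f^[n] x ∈ Icc p q := fun n => hmaps.iterate n hx
  have hbdd : BddAbove (range fun n => f^[n] x) ∧ BddBelow (range fun n => f^[n] x) :=
    ⟨⟨q, forall_mem_range.2 fun n => (hmem n).2⟩, ⟨p, forall_mem_range.2 fun n => (hmem n).1⟩⟩
  obtain ⟨L, hL⟩ : ∃ L, Tendsto (fun n => f^[n] x) atTop (𝓝 L) := horbit.elim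
    (fun h => ⟨_, tendsto_atTop_ciSup h hbdd.1⟩) (fun h => ⟨_, tendsto_atTop_ciInf h hbdd.2⟩)
  exact ⟨L, isClosed_Icc.mem_of_tendsto hL (Eventually.of_forall hmem), hL⟩

theorem eqOn_zero_of_mapsTo_of_apply_eq_neg {f D : ℝ → ℝ} {p q : ℝ}
    (hmaps : MapsTo f (Icc p q) (Icc p q)) (hmono : MonotoneOn f (Icc p q))
    (hD : ContinuousOn D (Icc p q)) (hflip : ∀ x ∈ Icc p q, D (f x) = -D x) :
    EqOn D 0 (Icc p q) := by
  intro x hx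
  obtain ⟨L, hL, hlim⟩ := exists_tendsto_iterate_of_mapsTo_Icc hmaps hmono hx
  have hmem : ∀ n, f^[n] x ∈ Icc p q := fun n => hmaps.iterate n hx
  refine eq_zero_of_tendsto_of_succ_eq_neg (v := fun n => D (f^[n] x))
    ((hD L hL).tendsto.comp (tendsto_nhdsWithin_iff.2 ⟨hlim, .of_forall hmem⟩)) fun n => ?_
  simp only [iterate_succ_apply']
  exact hflip _ (hmem n)

theorem eqOn_zero_of_surjOn_of_apply_eq_neg {f D : ℝ → ℝ} {p q : ℝ}
    (hsurj : SurjOn f (Icc p q) (Icc p q)) (hmono : StrictMonoOn f (Icc p q))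
    (hD : ContinuousOn D (Icc p q)) (hflip : ∀ x ∈ Icc p q, D (f x) = -D x) :
    EqOn D 0 (Icc p q) := by
  have hinv : ∀ x ∈ Icc p q, f (invFunOn f (Icc p q) x) = x := fun x hx =>
    hsurj.rightInvOn_invFunOn hx
  refine eqOn_zero_of_mapsTo_of_apply_eq_neg hsurj.mapsTo_invFunOn
    (fun x hx y hy hxy => ?_) hD fun x hx => ?_
  · rwa [← hmono.le_iff_le (hsurj.mapsTo_invFunOn hx) (hsurj.mapsTo_invFunOn hy), hinv x hx,
      hinv y hy]
  · rw [← neg_eq_iff_eq_neg, ← hflip _ (hsurj.mapsTo_invFunOn hx), hinv x hx]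

theorem mapsTo_uIcc_or_surjOn_uIcc_of_apply_eq_self {f : ℝ → ℝ} {x₀ x : ℝ}
    (hcont : ContinuousOn f (uIcc x₀ x)) (hmono : MonotoneOn f (uIcc x₀ x)) (hfix : f x₀ = x₀) :
    MapsTo f (uIcc x₀ x) (uIcc x₀ x) ∨ SurjOn f (uIcc x₀ x) (uIcc x₀ x) := by
  have himage := hmono.mapsTo_uIcc
  rw [hfix] at himage
  by_cases hfx : f x ∈ uIcc x₀ x
  · exact .inl (himage.mono_right (uIcc_subset_uIcc left_mem_uIcc hfx))
  · refine .inr (Subset.trans ?_ (hfix ▸ intermediate_value_uIcc hcont))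
    refine uIcc_subset_uIcc left_mem_uIcc ?_
    have hle := hmono left_mem_uIcc right_mem_uIcc
    have hge := hmono right_mem_uIcc left_mem_uIcc
    rw [hfix] at hle hge
    rw [mem_uIcc] at hfx ⊢
    rcases le_total x₀ x with h | h
    · exact .inl ⟨h, le_of_not_ge fun h' => hfx (.inl ⟨hle h, h'⟩)⟩
    · exact .inr ⟨le_of_not_ge fun h' => hfx (.inr ⟨h', hge h⟩), h⟩

theorem warping_pair_unique_general (a b c d α β : ℝ)
    (g₀ g₁ g₂ g₁inv : ℝ → ℝ)
    (hg₀cont : ContinuousOn g₀ (Set.Icc c d))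
    (hg₀mono : StrictMonoOn g₀ (Set.Icc c d))
    (hfix : ∃ t ∈ Set.Icc a b ∩ Set.Icc c d, g₀ t = t)
    (hg₁cont : ContinuousOn g₁ (Set.Icc a b))
    (hg₂surj : g₂ '' Set.Icc c d = Set.Icc α β)
    (hg₁inv_right : ∀ y ∈ Set.Icc α β, g₁ (g₁inv y) = y)
    (hcond_a : ∀ t ∈ Set.Icc a b ∩ Set.Icc c d, g₀ t = g₁inv (g₂ t))
    (hcond_b : ∀ t ∈ Set.Icc a b ∩ Set.Icc c d, (g₁ t + g₂ t) / 2 = t) :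
    ∀ (α' β' : ℝ) (G₁ G₂ G₁inv : ℝ → ℝ),
      Set.Icc α' β' ⊆ Set.Icc a b ∩ Set.Icc c d →
      ContinuousOn G₁ (Set.Icc a b) → StrictMonoOn G₁ (Set.Icc a b) →
      G₁ '' Set.Icc a b = Set.Icc α' β' →
      ContinuousOn G₂ (Set.Icc c d) → StrictMonoOn G₂ (Set.Icc c d) →
      G₂ '' Set.Icc c d = Set.Icc α' β' →
      (∀ x ∈ Set.Icc a b, G₁inv (G₁ x) = x) →
      (∀ y ∈ Set.Icc α' β', G₁ (G₁inv y) = y) →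
      (∀ t ∈ Set.Icc a b ∩ Set.Icc c d, g₀ t = G₁inv (G₂ t)) →
      (∀ t ∈ Set.Icc a b ∩ Set.Icc c d, (G₁ t + G₂ t) / 2 = t) →
      ∀ t ∈ Set.Icc a b ∩ Set.Icc c d, G₁ t = g₁ t ∧ G₂ t = g₂ t := by
  intro α' β' G₁ G₂ G₁inv _ hG₁cont _ _ _ _ hG₂surj _ hG₁inv_right hcond_a' hcond_b' t ht
  have hflip : ∀ s ∈ Icc a b ∩ Icc c d, (G₁ - g₁) (g₀ s) = -(G₁ - g₁) s := by
    intro s hs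
    have h₁ : g₁ (g₀ s) = g₂ s := by
      rw [hcond_a s hs, hg₁inv_right _ (hg₂surj ▸ mem_image_of_mem g₂ hs.2)]
    have h₂ : G₁ (g₀ s) = G₂ s := by
      rw [hcond_a' s hs, hG₁inv_right _ (hG₂surj ▸ mem_image_of_mem G₂ hs.2)]
    simp only [Pi.sub_apply, h₁, h₂]
    linarith [hcond_b s hs, hcond_b' s hs]
  obtain ⟨t₀, ht₀, hfix₀⟩ := hfix
  have hI : uIcc t₀ t ⊆ Icc a b ∩ Icc c d :=
    (ordConnected_Icc.inter ordConnected_Icc).uIcc_subset ht₀ ht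
  have hmono := hg₀mono.mono (hI.trans inter_subset_right)
  have hcontD := (hG₁cont.sub hg₁cont).mono (hI.trans inter_subset_left)
  have hflipI : ∀ s ∈ uIcc t₀ t, (G₁ - g₁) (g₀ s) = -(G₁ - g₁) s := fun s hs => hflip s (hI hs)
  have hD : (G₁ - g₁) t = 0 := by
    rcases mapsTo_uIcc_or_surjOn_uIcc_of_apply_eq_self
      (hg₀cont.mono (hI.trans inter_subset_right)) hmono.monotoneOn hfix₀ with h | h
    · exact eqOn_zero_of_mapsTo_of_apply_eq_neg h hmono.monotoneOn hcontD hflipI right_mem_uIcc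
    · exact eqOn_zero_of_surjOn_of_apply_eq_neg h hmono hcontD hflipI right_mem_uIcc
  have hG₁ : G₁ t = g₁ t := sub_eq_zero.1 hD
  exact ⟨hG₁, by linarith [hcond_b t ht, hcond_b' t ht]⟩

/-- Theorem 1, uniqueness: Let `g₀` be a continuous strictly increasing
function from `[c,d]` onto `[a,b]` such that `[a,b] ∩ [c,d]` contains a non-empty open
interval and `g₀` has a fixed point in `[a,b] ∩ [c,d]`.  If there are `[α,β] ⊆ [a,b] ∩ [c,d]`
and continuous, strictly increasing surjections `g₁ : [a,b] → [α,β]`, `g₂ : [c,d] → [α,β]`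
with (a) `g₀(t) = g₁⁻¹(g₂(t))` and (b) `(g₁(t)+g₂(t))/2 = t` on `[a,b] ∩ [c,d]`, then the
pair `(g₁,g₂)` is unique: any other such pair (with its own interval `[α',β']` contained in
`[a,b] ∩ [c,d]`) coincides with `(g₁,g₂)` on `[a,b] ∩ [c,d]`. -/
theorem warping_pair_unique (a b c d α β : ℝ) (hab : a < b) (hcd : c < d)
    (g₀ g₁ g₂ g₁inv : ℝ → ℝ)
    (hg₀cont : ContinuousOn g₀ (Set.Icc c d))
    (hg₀mono : StrictMonoOn g₀ (Set.Icc c d))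
    (hg₀range : g₀ '' Set.Icc c d = Set.Icc a b)
    (hopen : ∃ u v : ℝ, u < v ∧ Set.Ioo u v ⊆ Set.Icc a b ∩ Set.Icc c d)
    (hfix : ∃ t ∈ Set.Icc a b ∩ Set.Icc c d, g₀ t = t)
    (hαβ : Set.Icc α β ⊆ Set.Icc a b ∩ Set.Icc c d)
    (hg₁cont : ContinuousOn g₁ (Set.Icc a b))
    (hg₁mono : StrictMonoOn g₁ (Set.Icc a b))
    (hg₁surj : g₁ '' Set.Icc a b = Set.Icc α β)
    (hg₂cont : ContinuousOn g₂ (Set.Icc c d))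
    (hg₂mono : StrictMonoOn g₂ (Set.Icc c d))
    (hg₂surj : g₂ '' Set.Icc c d = Set.Icc α β)
    (hg₁inv_left : ∀ x ∈ Set.Icc a b, g₁inv (g₁ x) = x)
    (hg₁inv_right : ∀ y ∈ Set.Icc α β, g₁ (g₁inv y) = y)
    (hcond_a : ∀ t ∈ Set.Icc a b ∩ Set.Icc c d, g₀ t = g₁inv (g₂ t))
    (hcond_b : ∀ t ∈ Set.Icc a b ∩ Set.Icc c d, (g₁ t + g₂ t) / 2 = t) :
    ∀ (α' β' : ℝ) (G₁ G₂ G₁inv : ℝ → ℝ),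
      Set.Icc α' β' ⊆ Set.Icc a b ∩ Set.Icc c d →
      ContinuousOn G₁ (Set.Icc a b) → StrictMonoOn G₁ (Set.Icc a b) →
      G₁ '' Set.Icc a b = Set.Icc α' β' →
      ContinuousOn G₂ (Set.Icc c d) → StrictMonoOn G₂ (Set.Icc c d) →
      G₂ '' Set.Icc c d = Set.Icc α' β' →
      (∀ x ∈ Set.Icc a b, G₁inv (G₁ x) = x) →
      (∀ y ∈ Set.Icc α' β', G₁ (G₁inv y) = y) →
      (∀ t ∈ Set.Icc a b ∩ Set.Icc c d, g₀ t = G₁inv (G₂ t)) →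
      (∀ t ∈ Set.Icc a b ∩ Set.Icc c d, (G₁ t + G₂ t) / 2 = t) →
      ∀ t ∈ Set.Icc a b ∩ Set.Icc c d, G₁ t = g₁ t ∧ G₂ t = g₂ t :=
  warping_pair_unique_general a b c d α β g₀ g₁ g₂ g₁inv hg₀cont hg₀mono hfix hg₁cont hg₂surj
    hg₁inv_right hcond_a hcond_b
end

section
/- Fix t₀∈(0,1) and r>0 with r≠1 and r(1−t₀)<1, and define g₀:[0,1]→[0,1] by g₀(t) = ((1−r(1−t₀))/t₀)·t for t∈[0,t₀) and g₀(t) = 1−r(1−t) for t∈[t₀,1]. Then there is no pair of continuous and strictly increasing functions g₁:[0,1]→[0,1] and g₂:[0,1]→[0,1] such that g₀(t)=g₁⁻¹(g₂(t)) and (g₁(t)+g₂(t))/2 = t hold for all t∈[0,1]. -/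
/-!
Writing `g₂ t = 2 t - g₁ t`, the hypotheses say `g₁ (g₀ t) + g₁ t = 2 t`. On each piece `g₀` is a
homothety of ratio `ρ ≠ 1` about a fixed point `F` (ratio `a = (1 - r (1 - t₀)) / t₀` about `0` on
`[0, t₀]`, ratio `r` about `1` on `[t₀, 1]`), and the deviation of `g₁` from the affine solution
`F + 2 (x - F) / (1 + ρ)` changes sign under it. Iterating the homothety, or its inverse when
`ρ > 1`, drives every point to `F`, where the deviation vanishes and is continuous, so `g₁` is affine
on both pieces; the two lines meet at `t₀` only if `r = 1`.
-/

open Set Filter Topology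

section Homothety

variable {E : Type*} [NormedAddCommGroup E] [NormedSpace ℝ E]

lemma iterate_homothety_apply (F : E) (ρ : ℝ) (n : ℕ) (x : E) :
    (fun y => F + ρ • (y - F))^[n] x = F + ρ ^ n • (x - F) := by
  induction n with
  | zero => simp
  | succ n ih => rw [Function.iterate_succ_apply', ih, add_sub_cancel_left, smul_smul, pow_succ']

lemma tendsto_iterate_homothety {ρ : ℝ} (hρ : |ρ| < 1) (F x : E) :
    Tendsto (fun n => (fun y => F + ρ • (y - F))^[n] x) atTop (𝓝 F) := by
  simp_rw [iterate_homothety_apply]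
  simpa using tendsto_const_nhds.add
    ((tendsto_pow_atTop_nhds_zero_of_abs_lt_one hρ).smul_const (x - F))

lemma Convex.mapsTo_homothety {s : Set E} (hs : Convex ℝ s) {F : E} (hF : F ∈ s) {ρ : ℝ}
    (hρ : ρ ∈ Icc (0 : ℝ) 1) : MapsTo (fun y => F + ρ • (y - F)) s s :=
  fun _ hy => hs.add_smul_sub_mem hF hy hρ

variable {G : Type*} [NormedAddCommGroup G]

lemma Convex.eqOn_zero_of_norm_comp_homothety {s : Set E} (hs : Convex ℝ s) {F : E}
    (hF : F ∈ s) {ρ : ℝ} (hρ : ρ ∈ Ico (0 : ℝ) 1) {h : E → G} (hcont : ContinuousWithinAt h s F)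
    (hzero : h F = 0) (hnorm : ∀ x ∈ s, ‖h (F + ρ • (x - F))‖ = ‖h x‖) : EqOn h 0 s := by
  intro x hx
  have hmaps := hs.mapsTo_homothety hF (Ico_subset_Icc_self hρ)
  have horbit : ∀ n, ‖h ((fun y => F + ρ • (y - F))^[n] x)‖ = ‖h x‖ := by
    intro n
    induction n with
    | zero => rfl
    | succ n ih => rw [Function.iterate_succ_apply', hnorm _ (hmaps.iterate n hx), ih]
  have hlim : Tendsto (fun n => ‖h ((fun y => F + ρ • (y - F))^[n] x)‖) atTop (𝓝 ‖h F‖) :=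
    (hcont.tendsto.comp (tendsto_nhdsWithin_iff.2
      ⟨tendsto_iterate_homothety (abs_lt.2 ⟨by linarith [hρ.1], hρ.2⟩) F x,
        Eventually.of_forall fun n => hmaps.iterate n hx⟩)).norm
  simp only [horbit, hzero, norm_zero] at hlim
  exact norm_eq_zero.1 (tendsto_nhds_unique tendsto_const_nhds hlim)

lemma Convex.eqOn_zero_of_comp_homothety_eq_neg [IsAddTorsionFree G] {s : Set E}
    (hs : Convex ℝ s) {F : E} (hF : F ∈ s) {ρ : ℝ} (hρ0 : 0 < ρ) (hρ1 : ρ ≠ 1) {h : E → G}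
    (hcont : ContinuousWithinAt h s F) (hneg : ∀ x ∈ s, h (F + ρ • (x - F)) = -h x) :
    EqOn h 0 s := by
  have hzero : h F = 0 := self_eq_neg.1 (by simpa using hneg F hF)
  rcases hρ1.lt_or_gt with hρ1 | hρ1
  · refine hs.eqOn_zero_of_norm_comp_homothety hF ⟨hρ0.le, hρ1⟩ hcont hzero fun x hx => ?_
    rw [hneg x hx, norm_neg]
  · refine hs.eqOn_zero_of_norm_comp_homothety hF ⟨inv_nonneg.2 hρ0.le, inv_lt_one_of_one_lt₀ hρ1⟩
      hcont hzero fun x hx => ?_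
    have hy := hs.mapsTo_homothety hF ⟨inv_nonneg.2 hρ0.le, (inv_lt_one_of_one_lt₀ hρ1).le⟩ hx
    have hxy := hneg _ hy
    rw [add_sub_cancel_left, smul_smul, mul_inv_cancel₀ hρ0.ne', one_smul, add_sub_cancel] at hxy
    rw [hxy, norm_neg]

end Homothety

lemma Convex.eqOn_of_add_comp_homothety_eq {s : Set ℝ} (hs : Convex ℝ s) {F ρ : ℝ} (hF : F ∈ s)
    (hρ0 : 0 < ρ) (hρ1 : ρ ≠ 1) {g : ℝ → ℝ} (hcont : ContinuousWithinAt g s F)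
    (hg : ∀ x ∈ s, g (F + ρ * (x - F)) + g x = 2 * x) :
    EqOn g (fun x => F + 2 / (1 + ρ) * (x - F)) s := by
  have hρ : 1 + ρ ≠ 0 := by positivity
  have hdev := hs.eqOn_zero_of_comp_homothety_eq_neg hF hρ0 hρ1
    (h := fun x => g x - (F + 2 / (1 + ρ) * (x - F))) (hcont.sub (by fun_prop)) fun x hx => by
      simp only [smul_eq_mul]
      field_simp
      linear_combination (1 + ρ) * hg x hx
  intro x hx
  simpa [sub_eq_zero] using hdev hx

lemma eq_one_of_affine_pieces_agree {t₀ r a : ℝ} (ht₀ : t₀ < 1) (hr : 0 < r) (ha : 0 < a)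
    (hat₀ : a * t₀ = 1 - r * (1 - t₀)) (h : 2 / (1 + a) * t₀ = 1 + 2 / (1 + r) * (t₀ - 1)) :
    r = 1 := by
  field_simp at h
  have hsq : (1 - t₀) * (r - 1) ^ 2 = 0 := by
    linear_combination t₀ * h + (r + 2 * t₀ - 1) * hat₀
  rcases mul_eq_zero.1 hsq with h1 | h1
  · linarith
  · linarith [pow_eq_zero_iff two_ne_zero |>.1 h1]

/-- Theorem 2, non-existence: Fix `t₀ ∈ (0,1)` and `r > 0` with `r ≠ 1`
and `r(1−t₀) < 1`, and define `g₀ : [0,1] → [0,1]` by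
`g₀(t) = ((1−r(1−t₀))/t₀)·t` for `t ∈ [0,t₀)` and `g₀(t) = 1 − r(1−t)` for `t ∈ [t₀,1]`.
Then there is no pair of continuous, strictly increasing functions
`g₁, g₂ : [0,1] → [0,1]` with `g₀(t) = g₁⁻¹(g₂(t))` (equivalently, `g₁(g₀(t)) = g₂(t)`,
since `g₁` is injective) and `(g₁(t)+g₂(t))/2 = t` for all `t ∈ [0,1]`. -/
theorem no_symmetric_pair (t₀ r : ℝ) (ht₀ : t₀ ∈ Set.Ioo (0 : ℝ) 1) (hr : 0 < r)
    (hr1 : r ≠ 1) (hrt : r * (1 - t₀) < 1) :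
    ¬ ∃ g₁ g₂ : ℝ → ℝ,
        ContinuousOn g₁ (Set.Icc 0 1) ∧ StrictMonoOn g₁ (Set.Icc 0 1) ∧
        Set.MapsTo g₁ (Set.Icc 0 1) (Set.Icc 0 1) ∧
        ContinuousOn g₂ (Set.Icc 0 1) ∧ StrictMonoOn g₂ (Set.Icc 0 1) ∧
        Set.MapsTo g₂ (Set.Icc 0 1) (Set.Icc 0 1) ∧
        (∀ t ∈ Set.Icc (0 : ℝ) 1,
          g₁ (if t < t₀ then (1 - r * (1 - t₀)) / t₀ * t else 1 - r * (1 - t)) = g₂ t) ∧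
        (∀ t ∈ Set.Icc (0 : ℝ) 1, (g₁ t + g₂ t) / 2 = t) := by
  rintro ⟨g₁, g₂, hg₁, -, -, -, -, -, hrel, havg⟩
  obtain ⟨ht₀0, ht₀1⟩ := ht₀
  set a := (1 - r * (1 - t₀)) / t₀
  have ha : 0 < a := div_pos (by linarith) ht₀0
  have hat₀ : a * t₀ = 1 - r * (1 - t₀) := div_mul_cancel₀ _ ht₀0.ne'
  have ha1 : a ≠ 1 := fun h => hr1 <| by
    have : (1 - r) * (1 - t₀) = 0 := by rw [h] at hat₀; linear_combination -hat₀
    linarith [(mul_eq_zero.1 this).resolve_right (by linarith)]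
  have hsum : ∀ t ∈ Icc (0 : ℝ) 1,
      g₁ (if t < t₀ then a * t else 1 - r * (1 - t)) + g₁ t = 2 * t := fun t ht => by
    linarith [hrel t ht, havg t ht]
  have hL := (convex_Icc 0 t₀).eqOn_of_add_comp_homothety_eq (left_mem_Icc.2 ht₀0.le) ha ha1
    ((hg₁.mono (Icc_subset_Icc_right ht₀1.le)).continuousWithinAt (left_mem_Icc.2 ht₀0.le))
    fun x hx => by
      have := hsum x ⟨hx.1, hx.2.trans ht₀1.le⟩
      rcases hx.2.lt_or_eq with hx' | rfl
      · simpa [hx'] using this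
      · simpa [hat₀] using this
  have hR := (convex_Icc t₀ 1).eqOn_of_add_comp_homothety_eq (right_mem_Icc.2 ht₀1.le) hr hr1
    ((hg₁.mono (Icc_subset_Icc_left ht₀0.le)).continuousWithinAt (right_mem_Icc.2 ht₀1.le))
    fun x hx => by
      have := hsum x ⟨ht₀0.le.trans hx.1, hx.2⟩
      rwa [if_neg hx.1.not_gt, show 1 - r * (1 - x) = 1 + r * (x - 1) by ring] at this
  refine hr1 (eq_one_of_affine_pieces_agree ht₀1 hr ha hat₀ ?_)
  simpa using (hL (right_mem_Icc.2 ht₀0.le)).symm.trans (hR (left_mem_Icc.2 ht₀1.le))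
end

section
/- Let t₀>0, v∈(0,1), t_n = vⁿ t₀, and let h satisfy h(t_n) = (−1)ⁿ h(t₀) + 2t₀ Σ_{k=1}^{n} (−1)^{n−k} v^k for all n ≥ 0. Then for every even n ≥ 0: h(t_n) − h(t_{n+1}) = 2h(t₀) − 4t₀v/(1+v) + 2t₀·((1−v)/(1+v))·v^{n+1}, and for every odd n ≥ 1: h(t_n) − h(t_{n+1}) = −2h(t₀) + 4t₀v/(1+v) + 2t₀·((1−v)/(1+v))·v^{n+1}. -/
/-!
The closed form is `h(tₙ) = (-1)ⁿ h(t₀) + 2 t₀ Sₙ` with `Sₙ = ∑_{k=1}^{n} (-1)^{n-k} v^k`. These sums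
satisfy `Sₙ₊₁ = v^{n+1} - Sₙ`, and summing the alternating geometric series gives
`(1 + v) Sₙ = v^{n+1} - (-1)ⁿ v`. Hence
`h(tₙ) - h(tₙ₊₁) = 2 (-1)ⁿ h(t₀) + 2 t₀ (2 Sₙ - v^{n+1})`, which is the stated formula once `Sₙ` is
eliminated; the parity of `n` only fixes the sign `(-1)ⁿ`.
-/

open Finset

section AltPowSum

variable {R : Type*} [CommRing R]

def altPowSum (v : R) (n : ℕ) : R :=
  ∑ k ∈ Icc 1 n, (-1 : R) ^ (n - k) * v ^ k

theorem altPowSum_succ (v : R) (n : ℕ) : altPowSum v (n + 1) = v ^ (n + 1) - altPowSum v n := by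
  have shift : ∑ k ∈ Icc 1 n, (-1 : R) ^ (n + 1 - k) * v ^ k = -altPowSum v n := by
    rw [altPowSum, ← sum_neg_distrib]
    refine sum_congr rfl fun k hk => ?_
    rw [Nat.sub_add_comm (mem_Icc.mp hk).2, pow_succ]
    ring
  rw [altPowSum, sum_Icc_succ_top (Nat.le_add_left 1 n), shift, Nat.sub_self]
  ring

theorem one_add_mul_altPowSum (v : R) (n : ℕ) :
    (1 + v) * altPowSum v n = v ^ (n + 1) - (-1) ^ n * v := by
  induction n with
  | zero => simp [altPowSum]
  | succ n ih =>
    rw [altPowSum_succ]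
    linear_combination -ih

end AltPowSum

theorem orbit_difference_eq {t₀ v : ℝ} (hv : 1 + v ≠ 0) {h : ℝ → ℝ}
    (hform : ∀ n : ℕ, h (v ^ n * t₀) = (-1) ^ n * h t₀ + 2 * t₀ * altPowSum v n) (n : ℕ) :
    h (v ^ n * t₀) - h (v ^ (n + 1) * t₀) =
      (-1) ^ n * (2 * h t₀ - 4 * t₀ * v / (1 + v)) + 2 * t₀ * ((1 - v) / (1 + v)) * v ^ (n + 1) := by
  rw [hform, hform, altPowSum_succ]
  have hsum := one_add_mul_altPowSum v n
  field_simp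
  linear_combination 4 * t₀ * hsum

theorem orbit_differences_general (t₀ v : ℝ) (hv : v ∈ Set.Ioo (0 : ℝ) 1) (h : ℝ → ℝ)
    (hform : ∀ n : ℕ, h (v ^ n * t₀) =
      (-1 : ℝ) ^ n * h t₀ + 2 * t₀ * ∑ k ∈ Finset.Icc 1 n, (-1 : ℝ) ^ (n - k) * v ^ k) :
    (∀ n : ℕ, Even n →
        h (v ^ n * t₀) - h (v ^ (n + 1) * t₀) =
          2 * h t₀ - 4 * t₀ * v / (1 + v) + 2 * t₀ * ((1 - v) / (1 + v)) * v ^ (n + 1)) ∧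
    (∀ n : ℕ, Odd n →
        h (v ^ n * t₀) - h (v ^ (n + 1) * t₀) =
          -(2 * h t₀) + 4 * t₀ * v / (1 + v) + 2 * t₀ * ((1 - v) / (1 + v)) * v ^ (n + 1)) := by
  have hv₁ : 1 + v ≠ 0 := by linarith [hv.1]
  have hdiff := orbit_difference_eq hv₁ hform
  refine ⟨fun n hn => ?_, fun n hn => ?_⟩
  · rw [hdiff, hn.neg_one_pow, one_mul]
  · rw [hdiff, hn.neg_one_pow]
    ring

/-- With `t₀ > 0`, `v ∈ (0,1)`, `t n = vⁿ t₀`, and `h` satisfying the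
closed form `h (t n) = (−1)ⁿ h(t₀) + 2t₀ Σ_{k=1}^{n} (−1)^{n−k} v^k`, the consecutive
differences along the orbit satisfy: for even `n`,
`h(t n) − h(t (n+1)) = 2h(t₀) − 4t₀v/(1+v) + 2t₀((1−v)/(1+v))v^{n+1}`, and for odd `n`,
`h(t n) − h(t (n+1)) = −2h(t₀) + 4t₀v/(1+v) + 2t₀((1−v)/(1+v))v^{n+1}`. -/
theorem orbit_differences (t₀ v : ℝ) (ht₀ : 0 < t₀) (hv : v ∈ Set.Ioo (0 : ℝ) 1) (h : ℝ → ℝ)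
    (hform : ∀ n : ℕ, h (v ^ n * t₀) =
      (-1 : ℝ) ^ n * h t₀ + 2 * t₀ * ∑ k ∈ Finset.Icc 1 n, (-1 : ℝ) ^ (n - k) * v ^ k) :
    (∀ n : ℕ, Even n →
        h (v ^ n * t₀) - h (v ^ (n + 1) * t₀) =
          2 * h t₀ - 4 * t₀ * v / (1 + v) + 2 * t₀ * ((1 - v) / (1 + v)) * v ^ (n + 1)) ∧
    (∀ n : ℕ, Odd n →
        h (v ^ n * t₀) - h (v ^ (n + 1) * t₀) =
          -(2 * h t₀) + 4 * t₀ * v / (1 + v) + 2 * t₀ * ((1 - v) / (1 + v)) * v ^ (n + 1)) :=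
  orbit_differences_general t₀ v hv h hform
end

section
/- Let t₀>0, v∈(0,1), t_n = vⁿ t₀, and let h satisfy h(t_n) = (−1)ⁿ h(t₀) + 2t₀ Σ_{k=1}^{n} (−1)^{n−k} v^k for all n ≥ 0. If h(t_n) − h(t_{n+1}) → 0 as n → ∞ (in particular, if h extends to a function continuous at 0), then necessarily h(t₀) = 2t₀v/(1+v). -/
open Filter
open scoped Topology

/-!
Summing the alternating geometric series gives
`h (vⁿ t₀) = (-1)ⁿ A + 2 t₀ / (1 + v) * vⁿ⁺¹` with `A = h t₀ - 2 t₀ v / (1 + v)`.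
In consecutive differences the geometric part tends to `0`, leaving `(-1)ⁿ 2A`,
which converges to `0` only if `A = 0`.
-/

theorem sum_Icc_neg_one_pow_sub_mul_pow_mul_one_add {R : Type*} [CommRing R] (v : R) (n : ℕ) :
    (∑ k ∈ Finset.Icc 1 n, (-1 : R) ^ (n - k) * v ^ k) * (1 + v) = v ^ (n + 1) - (-1) ^ n * v := by
  induction n with
  | zero => simp
  | succ n ih =>
    have hshift : ∑ k ∈ Finset.Icc 1 n, (-1 : R) ^ (n + 1 - k) * v ^ k
        = -∑ k ∈ Finset.Icc 1 n, (-1 : R) ^ (n - k) * v ^ k := by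
      rw [← Finset.sum_neg_distrib]
      refine Finset.sum_congr rfl fun k hk => ?_
      rw [Nat.sub_add_comm (Finset.mem_Icc.mp hk).2, pow_succ]
      ring
    rw [Finset.sum_Icc_succ_top (Nat.le_add_left 1 n), hshift, Nat.sub_self, add_mul, neg_mul, ih]
    ring

theorem eq_zero_of_tendsto_neg_one_pow_mul_add {R : Type*} [Ring R] [TopologicalSpace R]
    [IsTopologicalAddGroup R] [T2Space R] {c : R} {e : ℕ → R}
    (h : Tendsto (fun n => (-1 : R) ^ n * c + e n) atTop (𝓝 0)) (he : Tendsto e atTop (𝓝 0)) :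
    c = 0 := by
  have halt : Tendsto (fun n => (-1 : R) ^ n * c) atTop (𝓝 0) := by
    simpa using h.sub he
  have heven : Tendsto (fun n => (-1 : R) ^ (2 * n) * c) atTop (𝓝 0) :=
    halt.comp (tendsto_id.const_mul_atTop' two_pos)
  simp only [pow_mul, neg_one_sq, one_pow, one_mul] at heven
  exact tendsto_nhds_unique tendsto_const_nhds heven

theorem limit_forces_value_general (t₀ v : ℝ) (hv : v ∈ Set.Ioo (0 : ℝ) 1) (h : ℝ → ℝ)
    (hform : ∀ n : ℕ, h (v ^ n * t₀) =
      (-1 : ℝ) ^ n * h t₀ + 2 * t₀ * ∑ k ∈ Finset.Icc 1 n, (-1 : ℝ) ^ (n - k) * v ^ k)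
    (hlim : Tendsto (fun n : ℕ => h (v ^ n * t₀) - h (v ^ (n + 1) * t₀)) atTop (𝓝 0)) :
    h t₀ = 2 * t₀ * v / (1 + v) := by
  obtain ⟨hv0, hv1⟩ := hv
  have hv' : 1 + v ≠ 0 := by positivity
  set A := h t₀ - 2 * t₀ * v / (1 + v) with hA_def
  have hclosed (n : ℕ) : h (v ^ n * t₀) = (-1) ^ n * A + 2 * t₀ / (1 + v) * v ^ (n + 1) := by
    rw [hform n, eq_div_of_mul_eq hv' (sum_Icc_neg_one_pow_sub_mul_pow_mul_one_add v n),
      hA_def]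
    field_simp
    ring
  have hdiff (n : ℕ) : h (v ^ n * t₀) - h (v ^ (n + 1) * t₀)
      = (-1) ^ n * (2 * A) + 2 * t₀ / (1 + v) * (1 - v) * v ^ (n + 1) := by
    rw [hclosed, hclosed, pow_succ (-1 : ℝ) n, pow_succ v (n + 1)]
    ring
  have hgeom : Tendsto (fun n => 2 * t₀ / (1 + v) * (1 - v) * v ^ (n + 1)) atTop (𝓝 0) := by
    simpa using ((tendsto_pow_atTop_nhds_zero_of_lt_one hv0.le hv1).comp
      (tendsto_add_atTop_nat 1)).const_mul (2 * t₀ / (1 + v) * (1 - v))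
  simp only [hdiff] at hlim
  have hA : 2 * A = 0 := eq_zero_of_tendsto_neg_one_pow_mul_add hlim hgeom
  linarith

/-- With `t₀ > 0`, `v ∈ (0,1)`, `t n = vⁿ t₀`, and `h` satisfying the
closed form `h (t n) = (−1)ⁿ h(t₀) + 2t₀ Σ_{k=1}^{n} (−1)^{n−k} v^k`, if
`h(t n) − h(t (n+1)) → 0` as `n → ∞`, then necessarily `h(t₀) = 2t₀v/(1+v)`. -/
theorem limit_forces_value (t₀ v : ℝ) (ht₀ : 0 < t₀) (hv : v ∈ Set.Ioo (0 : ℝ) 1) (h : ℝ → ℝ)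
    (hform : ∀ n : ℕ, h (v ^ n * t₀) =
      (-1 : ℝ) ^ n * h t₀ + 2 * t₀ * ∑ k ∈ Finset.Icc 1 n, (-1 : ℝ) ^ (n - k) * v ^ k)
    (hlim : Tendsto (fun n : ℕ => h (v ^ n * t₀) - h (v ^ (n + 1) * t₀)) atTop (𝓝 0)) :
    h t₀ = 2 * t₀ * v / (1 + v) :=
  limit_forces_value_general t₀ v hv h hform hlim
end
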